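/- arXiv:2409.08300 — 2 statements merged into one kernel-verified Lean document; each statement's English description precedes it below -/
import Mathlib

section
/- Let h : ℝⁿ → ℝ, let f : ℝⁿ × ℝ^q → ℝⁿ be system dynamics, and define ψ_0(x) = h(x) and recursively ψ_i(x_t) = ψ_{i-1}(x_{t+1}) - ψ_{i-1}(x_t) + γ_i ψ_{i-1}(x_t) along a trajectory x_{t+1} = f(x_t, u_t), with 0 < γ_i ≤ 1 for i = 1,…,m. If x_0 lies in the intersection of the sets C_i = {x : ψ_i(x) ≥ 0} for i = 0,…,m-1, and the controller satisfies ψ_m(x_t) ≥ 0 for all t ≥ 0, then x_t ∈ C_0 ∩ ⋯ ∩ C_{m-1} for all t ≥ 0. -/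
/-- DHOCBF forward invariance (Theorem 1 of the paper, with linear class-κ
functions α_i(s) = γ_i s).  The trajectory is `x : ℕ → ℝⁿ` generated by
`x (t+1) = f (x t) (u t)`, `ψ i t` denotes `ψ_i(x_t)`, defined by the
recursion `ψ_i(x_t) = ψ_{i-1}(x_{t+1}) - ψ_{i-1}(x_t) + γ_i ψ_{i-1}(x_t)`. -/
theorem dhocbf_safety_guarantee
    (n q m : ℕ)
    (h : (Fin n → ℝ) → ℝ)
    (f : (Fin n → ℝ) → (Fin q → ℝ) → (Fin n → ℝ))
    (x : ℕ → (Fin n → ℝ)) (u : ℕ → (Fin q → ℝ))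
    (γ : ℕ → ℝ) (hγ : ∀ i, 1 ≤ i → i ≤ m → 0 < γ i ∧ γ i ≤ 1)
    (hdyn : ∀ t : ℕ, x (t + 1) = f (x t) (u t))
    (ψ : ℕ → ℕ → ℝ)
    (hψ0 : ∀ t : ℕ, ψ 0 t = h (x t))
    (hψ : ∀ i t : ℕ, i < m →
      ψ (i + 1) t = ψ i (t + 1) - ψ i t + γ (i + 1) * ψ i t)
    (hinit : ∀ i : ℕ, i < m → ψ i 0 ≥ 0)
    (hctrl : ∀ t : ℕ, ψ m t ≥ 0) :
    ∀ t : ℕ, ∀ i : ℕ, i < m → ψ i t ≥ 0 := by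
  -- downward induction on i: if ψ_{i+1} ≥ 0 everywhere and ψ_i(0) ≥ 0, then ψ_i ≥ 0.
  have key : ∀ k i : ℕ, i + k = m → ∀ t : ℕ, ψ i t ≥ 0 := by
    intro k
    induction k with
    | zero =>
      intro i hi t
      obtain rfl : i = m := by omega
      exact hctrl t
    | succ k ih =>
      intro i hi t
      have him : i < m := by omega
      have hnext : ∀ s, ψ (i + 1) s ≥ 0 := ih (i + 1) (by omega)
      induction t with
      | zero => exact hinit i him
      | succ t iht =>
        have hrec := hψ i t him
        have hγi := hγ (i + 1) (by omega) (by omega)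
        have : ψ i (t + 1) = ψ (i + 1) t + (1 - γ (i + 1)) * ψ i t := by
          rw [hrec]; ring
        rw [this]
        have h1 : (1 - γ (i + 1)) * ψ i t ≥ 0 :=
          mul_nonneg (by linarith [hγi.2]) iht
        linarith [hnext t]
  intro t i hi
  exact key (m - i) i (by omega) t
end

section
/- For 2 ≤ i and 0 ≤ ν ≤ i-1, define Z_{ν,i} as the (i-ν-1)-th elementary symmetric polynomial in the variables (γ_1 - 1), …, (γ_{i-1} - 1) (with Z_{i-1,i} = 1, and Z_{i,i} = 0). Then the recursively defined sequence ψ_i(t) = ψ_{i-1}(t+1) + (γ_i - 1)ψ_{i-1}(t), with ψ_0 given, satisfies ψ_{i-1}(t) = Σ_{ν=0}^{i-1} Z_{ν,i} ψ_0(t+ν) for all t. -/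
/-- The coefficient `Z ν i` of equation (22): the elementary symmetric
polynomial of degree `i - ν - 1` in the variables `γ 1 - 1, …, γ (i-1) - 1`. -/
noncomputable def Zcoef (γ : ℕ → ℝ) (ν i : ℕ) : ℝ :=
  ∑ S ∈ (Finset.Icc 1 (i - 1)).powersetCard (i - ν - 1), ∏ s ∈ S, (γ s - 1)

/-!
With `S` the forward shift on sequences, the recursion reads `ψ k = (S + (γ k - 1)) (ψ (k - 1))`,
so `ψ (i - 1) = ∏_{j=1}^{i-1} (S + (γ j - 1)) (ψ 0)`. Vieta's formula expands this product of
commuting operators as `∑ ν, Z ν i • S ^ ν`.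
-/

open Polynomial Finset

section Shift

variable {R M : Type*} [CommSemiring R] [AddCommMonoid M] [Module R M]

variable (R M) in
abbrev seqShift : Module.End R (ℕ → M) := LinearMap.funLeft R M (· + 1)

theorem seqShift_pow_apply (ν : ℕ) (f : ℕ → M) (t : ℕ) :
    (seqShift R M ^ ν) f t = f (t + ν) := by
  induction ν generalizing f t with
  | zero => rfl
  | succ ν ih => rw [pow_succ, Module.End.mul_apply, ih]; rfl

theorem aeval_seqShift_apply {p : R[X]} {n : ℕ} (hp : p.natDegree < n) (f : ℕ → M) (t : ℕ) :
    aeval (seqShift R M) p f t = ∑ ν ∈ range n, p.coeff ν • f (t + ν) := by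
  simp [aeval_eq_sum_range' hp, seqShift_pow_apply]

theorem eq_aeval_seqShift_prod {ψ : ℕ → ℕ → M} {c : ℕ → R}
    (hrec : ∀ j t, ψ (j + 1) t = ψ j (t + 1) + c (j + 1) • ψ j t) (k : ℕ) :
    ψ k = aeval (seqShift R M) (∏ j ∈ Icc 1 k, (X + C (c j))) (ψ 0) := by
  induction k with
  | zero => simp
  | succ k ih =>
    rw [prod_Icc_succ_top (by omega), mul_comm, map_mul, Module.End.mul_apply, ← ih]
    ext t
    simp only [hrec, map_add, aeval_X, aeval_C, LinearMap.add_apply, Module.algebraMap_end_apply,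
      Pi.add_apply, LinearMap.funLeft_apply, Pi.smul_apply]

end Shift

theorem dhocbf_expansion_coefficients (γ : ℕ → ℝ) (i : ℕ) (hi : 2 ≤ i)
    (ψ : ℕ → ℕ → ℝ)
    (hrec : ∀ j t : ℕ, ψ (j + 1) t = ψ j (t + 1) + (γ (j + 1) - 1) * ψ j t) :
    ∀ t : ℕ, ψ (i - 1) t = ∑ ν ∈ Finset.range i, Zcoef γ ν i * ψ 0 (t + ν) := by
  intro t
  have hdeg : (∏ j ∈ Icc 1 (i - 1), (X + C (γ j - 1))).natDegree < i := by
    rw [natDegree_prod_of_monic _ _ fun j _ => monic_X_add_C _]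
    simp only [natDegree_X_add_C, sum_const, Nat.card_Icc, smul_eq_mul, mul_one]
    omega
  rw [eq_aeval_seqShift_prod (c := fun j => γ j - 1) hrec, aeval_seqShift_apply hdeg]
  refine sum_congr rfl fun ν hν => ?_
  rw [prod_X_add_C_coeff _ _ (by simp at hν ⊢; omega), Nat.card_Icc, smul_eq_mul, Zcoef,
    Nat.add_sub_cancel, Nat.sub_right_comm]
end
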